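/- arXiv:2012.03658 — 5 statements merged into one kernel-verified Lean document; each statement's English description precedes it below -/
import Mathlib

section
/- Let 0 = γ¹ < γ² < … < γ^q be given rates and L ≥ 1. Define vectors v^{k,q} ∈ ℝ^L recursively by v^{0,q} = 0, v^{1,q} = e_1 (first unit vector), v^{k,q} = (2^{γ^k} D v^{k−1,q} − v^{k−1,q})/(2^{γ^k} − 1) for 1 < k < q, and v^{k,q} = D v^{k−1,q} for k ≥ q, where D ∈ ℝ^{L×L} is the down-shift matrix (D e_j = e_{j+1} for j < L, D e_L = 0). Then the differences {v^{1,q} − v^{0,q}, v^{2,q} − v^{1,q}, …, v^{L,q} − v^{L−1,q}} form a basis of ℝ^L. -/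
/-!
Row `k` of the matrix of differences `v^{k+1,q} − v^{k,q}` vanishes beyond position `k`, because
`v^{k,q}` is supported on the first `k` coordinates (each step shifts down by at most one place).
Its entry at position `k` is the leading coefficient of `v^{k+1,q}`, a product of the factors
`2^{γ^j} / (2^{γ^j} − 1)` and `1`, all positive since `γ^j > 0` for `j ≥ 2`. The matrix is thus
lower triangular with nonzero diagonal, hence invertible.
-/

/-- The down-shift operator on `ℝ^L`: `(D v)_{ℓ+1} = v_ℓ` and `(D v)_1 = 0`. -/
def reShift {L : ℕ} (v : Fin L → ℝ) : Fin L → ℝ :=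
  fun ℓ => if (ℓ : ℕ) = 0 then 0
    else v ⟨(ℓ : ℕ) - 1, Nat.lt_of_le_of_lt (Nat.sub_le _ 1) ℓ.2⟩

/-- The Richardson extrapolation coefficient vectors `v^{k,q} ∈ ℝ^L`:
`v^{0,q} = 0`, `v^{1,q} = e_1`,
`v^{k,q} = (2^{γ^k} D v^{k−1,q} − v^{k−1,q})/(2^{γ^k} − 1)` for `1 < k < q`, and
`v^{k,q} = D v^{k−1,q}` for `k ≥ q`, where `D` is the down-shift matrix. -/
noncomputable def reVec (L q : ℕ) (γ : ℕ → ℝ) : ℕ → Fin L → ℝ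
  | 0 => 0
  | 1 => fun ℓ => if (ℓ : ℕ) = 0 then 1 else 0
  | (k + 2) =>
      if k + 2 < q then
        ((2 : ℝ) ^ (γ (k + 2)) - 1)⁻¹ •
          ((2 : ℝ) ^ (γ (k + 2)) • reShift (reVec L q γ (k + 1)) - reVec L q γ (k + 1))
      else reShift (reVec L q γ (k + 1))

open Finset

theorem linearIndependent_of_lowerTriangular {K ι : Type*} [Field K] [Fintype ι] [LinearOrder ι]
    (v : ι → ι → K) (hv : ∀ i j, i < j → v i j = 0) (hdiag : ∀ i, v i i ≠ 0) :
    LinearIndependent K v := by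
  have htri : (Matrix.of v).IsLowerTriangular := fun i j hij => hv i j hij
  have hdet : (Matrix.of v).det ≠ 0 := by
    rw [Matrix.det_of_isLowerTriangular _ htri]
    exact prod_ne_zero_iff.mpr fun i _ => hdiag i
  exact Matrix.linearIndependent_rows_iff_isUnit.mpr
    ((Matrix.isUnit_iff_isUnit_det _).mpr hdet.isUnit)

theorem apply_pos_of_apply_one_eq_zero (q : ℕ) (γ : ℕ → ℝ) (hγ1 : γ 1 = 0)
    (hmono : ∀ j, 1 ≤ j → j < q → γ j < γ (j + 1)) (j : ℕ) (hj : 2 ≤ j) (hjq : j ≤ q) :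
    0 < γ j := by
  induction j, hj using Nat.le_induction with
  | base => exact hγ1 ▸ hmono 1 le_rfl hjq
  | succ j hj ih => exact (ih (by omega)).trans (hmono j (by omega) (by omega))

section reVec

variable {L q : ℕ} {γ : ℕ → ℝ}

theorem reShift_apply_of_ne_zero (v : Fin L → ℝ) (ℓ : Fin L) (hℓ : (ℓ : ℕ) ≠ 0) :
    reShift v ℓ = v ⟨(ℓ : ℕ) - 1, by omega⟩ :=
  if_neg hℓ

theorem reVec_apply_eq_zero_of_le (k : ℕ) (ℓ : Fin L) (hkℓ : k ≤ ℓ) : reVec L q γ k ℓ = 0 := by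
  induction k generalizing ℓ with
  | zero => rfl
  | succ k ih =>
    rcases k with _ | k
    · exact if_neg (by omega)
    · have hshift : reShift (reVec L q γ (k + 1)) ℓ = 0 := by
        rw [reShift_apply_of_ne_zero _ _ (by omega)]
        exact ih _ (by simp only; omega)
      simp only [reVec]
      split
      · simp [hshift, ih ℓ (by omega)]
      · exact hshift

theorem reVec_apply_pos (hγ : ∀ j, 2 ≤ j → j < q → 0 < γ j) (ℓ : Fin L) :
    0 < reVec L q γ ((ℓ : ℕ) + 1) ℓ := by
  obtain ⟨ℓ, hℓL⟩ := ℓ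
  induction ℓ with
  | zero => simp [reVec]
  | succ ℓ ih =>
    have hshift : 0 < reShift (reVec L q γ (ℓ + 1)) ⟨ℓ + 1, hℓL⟩ := by
      rw [reShift_apply_of_ne_zero _ _ (by simp)]
      exact ih (by omega)
    simp only [reVec]
    split
    · next hq =>
      have h2γ : 1 < (2 : ℝ) ^ γ (ℓ + 2) := Real.one_lt_rpow one_lt_two (hγ _ le_add_self hq)
      have hzero : reVec L q γ (ℓ + 1) ⟨ℓ + 1, hℓL⟩ = 0 := reVec_apply_eq_zero_of_le _ _ le_rfl
      simp only [Pi.smul_apply, Pi.sub_apply, hzero, smul_eq_mul, sub_zero]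
      have hden : 0 < (2 : ℝ) ^ γ (ℓ + 2) - 1 := by linarith
      positivity
    · exact hshift

end reVec

theorem stmt_4_general (L q : ℕ) (γ : ℕ → ℝ) (hγ1 : γ 1 = 0)
    (hmono : ∀ j, 1 ≤ j → j < q → γ j < γ (j + 1)) :
    LinearIndependent ℝ
        (fun k : Fin L => reVec L q γ ((k : ℕ) + 1) - reVec L q γ (k : ℕ)) ∧
      Submodule.span ℝ
        (Set.range (fun k : Fin L => reVec L q γ ((k : ℕ) + 1) - reVec L q γ (k : ℕ)))
        = ⊤ := by
  have hγ : ∀ j, 2 ≤ j → j < q → 0 < γ j := fun j hj hjq =>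
    apply_pos_of_apply_one_eq_zero q γ hγ1 hmono j hj hjq.le
  have hli : LinearIndependent ℝ
      (fun k : Fin L => reVec L q γ ((k : ℕ) + 1) - reVec L q γ (k : ℕ)) := by
    refine linearIndependent_of_lowerTriangular _ (fun k ℓ hkℓ => ?_) (fun k => ?_)
    · have hkℓ : (k : ℕ) < ℓ := hkℓ
      simp [reVec_apply_eq_zero_of_le _ ℓ hkℓ, reVec_apply_eq_zero_of_le _ ℓ hkℓ.le]
    · simpa [reVec_apply_eq_zero_of_le _ k le_rfl] using (reVec_apply_pos hγ k).ne'
  exact ⟨hli, hli.span_eq_top_of_card_eq_finrank' (by simp)⟩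

/-- The differences `v^{k,q} − v^{k−1,q}`, `k = 1,…,L`, of the Richardson extrapolation
vectors form a basis of `ℝ^L`. -/
theorem stmt_4 (L q : ℕ) (hL : 1 ≤ L) (γ : ℕ → ℝ) (hγ1 : γ 1 = 0)
    (hmono : ∀ j, 1 ≤ j → j < q → γ j < γ (j + 1)) :
    LinearIndependent ℝ
        (fun k : Fin L => reVec L q γ ((k : ℕ) + 1) - reVec L q γ (k : ℕ)) ∧
      Submodule.span ℝ
        (Set.range (fun k : Fin L => reVec L q γ ((k : ℕ) + 1) - reVec L q γ (k : ℕ)))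
        = ⊤ :=
  stmt_4_general L q γ hγ1 hmono
end

section
/- Assume there exist q ∈ ℕ, rates 0 = γ¹ < … < γ^q, square-integrable random variables Z, c_2,…,c_{q−1}, and a constant c > 0, such that for all sufficiently large ℓ, E[(Z_ℓ − Z − Σ_{j=2}^{q−1} c_j 2^{−ℓγ^j})²] ≤ c·2^{−2ℓγ^q}. Then the Richardson extrapolated means satisfy |Σ_{ℓ=1}^k v^{k,q}_ℓ E[Z_ℓ] − E[Z]| ≤ c'·2^{−kγ^q} for all k, for a constant c' independent of k. -/
open Finset MeasureTheory ProbabilityTheory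
open Asymptotics Filter

def downShift (w : ℕ → ℝ) : ℕ → ℝ
  | 0 => 0
  | ℓ + 1 => w ℓ

-- `richardsonCoeff q γ k ℓ` is the entry `v^{k,q}_{ℓ+1}` (0-based), whatever the length `L`.
noncomputable def richardsonCoeff (q : ℕ) (γ : ℕ → ℝ) : ℕ → ℕ → ℝ
  | 0 => 0
  | 1 => Pi.single 0 1
  | k + 2 =>
      if k + 2 < q then
        ((2 : ℝ) ^ γ (k + 2) - 1)⁻¹ • ((2 : ℝ) ^ γ (k + 2) • downShift (richardsonCoeff q γ (k + 1)) -
          richardsonCoeff q γ (k + 1))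
      else downShift (richardsonCoeff q γ (k + 1))

theorem reVec_apply (L q : ℕ) (γ : ℕ → ℝ) : ∀ k (ℓ : Fin L),
    reVec L q γ k ℓ = richardsonCoeff q γ k ℓ
  | 0, ℓ => rfl
  | 1, ℓ => by simp [reVec, richardsonCoeff, Pi.single_apply]
  | k + 2, ℓ => by
    have hshift : reShift (reVec L q γ (k + 1)) ℓ = downShift (richardsonCoeff q γ (k + 1)) ℓ := by
      obtain ⟨_ | i, hi⟩ := ℓ
      · rfl
      · simp [reShift, downShift, reVec_apply L q γ (k + 1)]
    by_cases hk : k + 2 < q <;> simp [reVec, richardsonCoeff, hk, hshift, reVec_apply L q γ (k + 1)]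

theorem richardsonCoeff_eq_zero_of_le (q : ℕ) (γ : ℕ → ℝ) : ∀ {k ℓ : ℕ}, k ≤ ℓ →
    richardsonCoeff q γ k ℓ = 0
  | 0, ℓ, _ => rfl
  | 1, ℓ, h => by
    simp only [richardsonCoeff, Pi.single_apply, ite_eq_right_iff, one_ne_zero, imp_false]
    omega
  | k + 2, ℓ + 1, h => by
    have h₁ := richardsonCoeff_eq_zero_of_le q γ (k := k + 1) (ℓ := ℓ) (by omega)
    have h₂ := richardsonCoeff_eq_zero_of_le q γ (k := k + 1) (ℓ := ℓ + 1) (by omega)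
    by_cases hk : k + 2 < q <;> simp [richardsonCoeff, hk, downShift, h₁, h₂]

noncomputable def richardsonMean (q : ℕ) (γ : ℕ → ℝ) (k : ℕ) : (ℕ → ℝ) →ₗ[ℝ] ℝ :=
  ∑ ℓ ∈ range k, richardsonCoeff q γ k ℓ • LinearMap.proj (ℓ + 1)

section RichardsonMean

variable {q : ℕ} {γ : ℕ → ℝ}

theorem richardsonMean_apply (k : ℕ) (a : ℕ → ℝ) :
    richardsonMean q γ k a = ∑ ℓ ∈ range k, richardsonCoeff q γ k ℓ * a (ℓ + 1) := by
  simp [richardsonMean]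

theorem sum_reVec_mul_eq_richardsonMean (k : ℕ) (a : ℕ → ℝ) :
    ∑ ℓ : Fin k, reVec k q γ k ℓ * a (ℓ + 1) = richardsonMean q γ k a := by
  simp only [reVec_apply, richardsonMean_apply]
  exact Fin.sum_univ_eq_sum_range (fun ℓ => richardsonCoeff q γ k ℓ * a (ℓ + 1)) k

theorem richardsonMean_one (a : ℕ → ℝ) : richardsonMean q γ 1 a = a 1 := by
  simp [richardsonMean_apply, richardsonCoeff]

theorem richardsonMean_add_two (k : ℕ) (a : ℕ → ℝ) :
    richardsonMean q γ (k + 2) a =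
      if k + 2 < q then
        ((2 : ℝ) ^ γ (k + 2) - 1)⁻¹ * ((2 : ℝ) ^ γ (k + 2) *
          richardsonMean q γ (k + 1) (fun n => a (n + 1)) - richardsonMean q γ (k + 1) a)
      else richardsonMean q γ (k + 1) (fun n => a (n + 1)) := by
  set w := richardsonCoeff q γ (k + 1)
  have hshift : ∑ ℓ ∈ range (k + 2), downShift w ℓ * a (ℓ + 1) =
      richardsonMean q γ (k + 1) (fun n => a (n + 1)) := by
    simp [sum_range_succ' _ (k + 1), downShift, richardsonMean_apply, w]
  have hextend : ∑ ℓ ∈ range (k + 2), w ℓ * a (ℓ + 1) = richardsonMean q γ (k + 1) a := by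
    simp [sum_range_succ _ (k + 1), richardsonCoeff_eq_zero_of_le q γ le_rfl, richardsonMean_apply,
      w]
  rw [richardsonMean_apply, ← hshift, ← hextend]
  by_cases hk : k + 2 < q
  · simp only [richardsonCoeff, hk, if_true, mul_sum, ← sum_sub_distrib]
    exact sum_congr rfl fun ℓ _ => by simp [w]; ring
  · simp [richardsonCoeff, hk, w]

theorem richardsonMean_const (hγ : ∀ j, 2 ≤ j → j < q → 0 < γ j) :
    ∀ k, richardsonMean q γ (k + 1) (fun _ => 1) = 1
  | 0 => richardsonMean_one _
  | k + 1 => by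
    rw [richardsonMean_add_two, richardsonMean_const hγ k]
    split_ifs with hk
    · have : (2 : ℝ) ^ γ (k + 2) - 1 ≠ 0 :=
        sub_ne_zero.2 (Real.one_lt_rpow one_lt_two (hγ _ le_add_self hk)).ne'
      field_simp
    · rfl

theorem richardsonMean_geometric_eq_zero {j k : ℕ} (hj : 2 ≤ j) (hjq : j < q) (hjk : j ≤ k) :
    richardsonMean q γ k (fun n => (2 : ℝ) ^ (-(n : ℝ) * γ j)) = 0 := by
  set g : ℕ → ℝ := fun n => (2 : ℝ) ^ (-(n : ℝ) * γ j)
  have hshift (i : ℕ) : richardsonMean q γ i (fun n => g (n + 1)) =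
      (2 : ℝ) ^ (-γ j) * richardsonMean q γ i g := by
    rw [← smul_eq_mul, ← map_smul]
    congr 1
    ext n
    simp only [g, Pi.smul_apply, smul_eq_mul, ← Real.rpow_add two_pos]
    push_cast
    ring_nf
  induction k, hjk using Nat.le_induction with
  | base =>
    obtain ⟨i, rfl⟩ := Nat.exists_eq_add_of_le' hj
    rw [richardsonMean_add_two, if_pos hjq, hshift, ← mul_assoc, ← Real.rpow_add two_pos]
    simp
  | succ k hjk ih =>
    obtain ⟨i, rfl⟩ := Nat.exists_eq_add_of_le' (hj.trans hjk)
    rw [richardsonMean_add_two, hshift, ih]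
    simp

theorem richardsonMean_add_eq_of_le {K : ℕ} (hK : q ≤ K + 2) (a : ℕ → ℝ) :
    ∀ n, richardsonMean q γ (K + 1 + n) a = richardsonMean q γ (K + 1) (fun m => a (m + n))
  | 0 => rfl
  | n + 1 => by
    rw [show K + 1 + (n + 1) = K + n + 2 by ring, richardsonMean_add_two, if_neg (by omega),
      show K + n + 1 = K + 1 + n by ring, richardsonMean_add_eq_of_le hK _ n]
    simp only [add_assoc]

theorem richardsonMean_sub_eq_richardsonMean_error (hγ : ∀ j, 2 ≤ j → j < q → 0 < γ j) {k : ℕ}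
    (hk : q ≤ k + 2) (a b : ℕ → ℝ) (m : ℝ) :
    richardsonMean q γ (k + 1) a - m = richardsonMean q γ (k + 1)
      (fun n => a n - m - ∑ j ∈ Icc 2 (q - 1), b j * (2 : ℝ) ^ (-(n : ℝ) * γ j)) := by
  have hsplit : (fun n => a n - m - ∑ j ∈ Icc 2 (q - 1), b j * (2 : ℝ) ^ (-(n : ℝ) * γ j)) =
      a - m • (fun _ => 1) -
        ∑ j ∈ Icc 2 (q - 1), b j • fun n : ℕ => (2 : ℝ) ^ (-(n : ℝ) * γ j) := by
    ext n
    simp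
  have hvanish : ∀ j ∈ Icc 2 (q - 1),
      richardsonMean q γ (k + 1) (b j • fun n : ℕ => (2 : ℝ) ^ (-(n : ℝ) * γ j)) = 0 := by
    intro j hj
    rw [mem_Icc] at hj
    rw [map_smul, richardsonMean_geometric_eq_zero hj.1 (by omega) (by omega), smul_zero]
  rw [hsplit, map_sub, map_sub, map_sum, sum_eq_zero hvanish, map_smul, richardsonMean_const hγ]
  simp

theorem richardsonMean_isBigO {r : ℕ → ℝ} {ρ : ℝ} (hρ : 0 < ρ) (hr : r =O[atTop] fun n => ρ ^ n) :
    (fun k => richardsonMean q γ k r) =O[atTop] fun k => ρ ^ k := by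
  obtain ⟨A, hA⟩ := hr.bound
  obtain ⟨ℓ₀, hℓ₀⟩ := eventually_atTop.1 hA
  set K := q - 2
  set w := richardsonCoeff q γ (K + 1)
  set S := ∑ ℓ ∈ range (K + 1), |w ℓ| * ρ ^ (ℓ + 1)
  refine IsBigO.of_bound (A * S / ρ ^ (K + 1)) (eventually_atTop.2 ⟨K + 1 + ℓ₀, fun k hk => ?_⟩)
  obtain ⟨n, rfl⟩ : ∃ n, k = K + 1 + n := ⟨k - (K + 1), by omega⟩
  have hterm (ℓ : ℕ) : |w ℓ * r (ℓ + 1 + n)| ≤ |w ℓ| * (A * ρ ^ (ℓ + 1 + n)) := by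
    rw [abs_mul]
    refine mul_le_mul_of_nonneg_left ?_ (abs_nonneg _)
    simpa [abs_of_pos hρ] using hℓ₀ (ℓ + 1 + n) (by omega)
  rw [richardsonMean_add_eq_of_le (by omega) r n, richardsonMean_apply, Real.norm_eq_abs,
    Real.norm_of_nonneg (pow_nonneg hρ.le _)]
  calc |∑ ℓ ∈ range (K + 1), w ℓ * r (ℓ + 1 + n)|
      ≤ ∑ ℓ ∈ range (K + 1), |w ℓ| * (A * ρ ^ (ℓ + 1 + n)) :=
        (abs_sum_le_sum_abs _ _).trans (sum_le_sum fun ℓ _ => hterm ℓ)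
    _ = A * S * ρ ^ n := by
        simp only [S, mul_sum, sum_mul]
        exact sum_congr rfl fun ℓ _ => by rw [pow_add _ (ℓ + 1)]; ring
    _ = A * S / ρ ^ (K + 1) * ρ ^ (K + 1 + n) := by
        rw [pow_add ρ (K + 1) n]
        field_simp

end RichardsonMean

theorem pos_of_lt_succ_of_eq_zero {q : ℕ} {γ : ℕ → ℝ} (hγ1 : γ 1 = 0)
    (hmono : ∀ j, 1 ≤ j → j < q → γ j < γ (j + 1)) {j : ℕ} (hj : 2 ≤ j) (hjq : j < q) :
    0 < γ j := by
  induction j, hj using Nat.le_induction with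
  | base => simpa [hγ1] using hmono 1 le_rfl (by omega)
  | succ j hj ih => exact (ih (by omega)).trans (hmono j (by omega) (by omega))

theorem two_rpow_neg_natCast_mul (n : ℕ) (x : ℝ) :
    (2 : ℝ) ^ (-(n : ℝ) * x) = ((2 : ℝ) ^ (-x)) ^ n := by
  rw [← Real.rpow_mul_natCast zero_le_two]
  ring_nf

section Integral

variable {Ω : Type*} [MeasurableSpace Ω] {P : Measure Ω}

theorem integral_sub_sub_sum_mul {ι : Type*} {X Y : Ω → ℝ} {c : ι → Ω → ℝ} (s : Finset ι)
    (t : ι → ℝ) (hX : Integrable X P) (hY : Integrable Y P) (hc : ∀ j ∈ s, Integrable (c j) P) :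
    ∫ ω, (X ω - Y ω - ∑ j ∈ s, c j ω * t j) ∂P =
      ∫ ω, X ω ∂P - ∫ ω, Y ω ∂P - ∑ j ∈ s, (∫ ω, c j ω ∂P) * t j := by
  have hc' : ∀ j ∈ s, Integrable (fun ω => c j ω * t j) P := fun j hj => (hc j hj).mul_const _
  have hXY : Integrable (fun ω => X ω - Y ω) P := hX.sub hY
  rw [integral_sub hXY (integrable_finsetSum s hc'), integral_sub hX hY,
    integral_finsetSum s hc']
  simp only [integral_mul_const]

theorem abs_integral_le_sqrt_integral_sq [IsProbabilityMeasure P] {f : Ω → ℝ} (hf : MemLp f 2 P) :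
    |∫ ω, f ω ∂P| ≤ √(∫ ω, f ω ^ 2 ∂P) := by
  refine Real.abs_le_sqrt ?_
  have := variance_nonneg f P
  rw [variance_eq_sub hf] at this
  simpa using this

theorem isBigO_integral_of_integral_sq_le [IsProbabilityMeasure P] {ι : Type*} {l : Filter ι}
    {f : ι → Ω → ℝ} (hf : ∀ i, MemLp (f i) 2 P) {g : ι → ℝ} {c : ℝ}
    (h : ∀ᶠ i in l, ∫ ω, f i ω ^ 2 ∂P ≤ c * g i ^ 2) :
    (fun i => ∫ ω, f i ω ∂P) =O[l] g := by
  refine IsBigO.of_bound √c (h.mono fun i hi => ?_)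
  calc ‖∫ ω, f i ω ∂P‖ ≤ √(∫ ω, f i ω ^ 2 ∂P) := abs_integral_le_sqrt_integral_sq (hf i)
    _ ≤ √(c * g i ^ 2) := Real.sqrt_le_sqrt hi
    _ = √c * ‖g i‖ := by rw [Real.sqrt_mul' c (sq_nonneg _), Real.sqrt_sq_eq_abs, Real.norm_eq_abs]

end Integral

theorem stmt_7_general {Ω : Type*} [MeasurableSpace Ω] (P : Measure Ω) [IsProbabilityMeasure P]
    (q : ℕ) (γ : ℕ → ℝ) (hγ1 : γ 1 = 0)
    (hmono : ∀ j, 1 ≤ j → j < q → γ j < γ (j + 1))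
    (Z : Ω → ℝ) (Zs : ℕ → Ω → ℝ) (cf : ℕ → Ω → ℝ)
    (hZ : MemLp Z 2 P) (hZs : ∀ ℓ, MemLp (Zs ℓ) 2 P)
    (hcf : ∀ j, MemLp (cf j) 2 P)
    (c : ℝ) (ℓ₀ : ℕ)
    (hexp : ∀ ℓ : ℕ, ℓ₀ ≤ ℓ →
      ∫ ω, (Zs ℓ ω - Z ω -
          ∑ j ∈ Finset.Icc 2 (q - 1), cf j ω * (2 : ℝ) ^ (-(ℓ : ℝ) * γ j)) ^ 2 ∂P
        ≤ c * (2 : ℝ) ^ (-2 * (ℓ : ℝ) * γ q)) :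
    ∃ c' > 0, ∀ k : ℕ, 1 ≤ k →
      |(∑ ℓ : Fin k, reVec k q γ k ℓ * ∫ ω, Zs ((ℓ : ℕ) + 1) ω ∂P) - ∫ ω, Z ω ∂P|
        ≤ c' * (2 : ℝ) ^ (-(k : ℝ) * γ q) := by
  set ρ := (2 : ℝ) ^ (-γ q)
  have hρ : 0 < ρ := Real.rpow_pos_of_pos two_pos _
  set r : ℕ → ℝ := fun n => ∫ ω, Zs n ω ∂P - ∫ ω, Z ω ∂P -
    ∑ j ∈ Icc 2 (q - 1), (∫ ω, cf j ω ∂P) * (2 : ℝ) ^ (-(n : ℝ) * γ j)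
  have hr : r =O[atTop] fun n => ρ ^ n := by
    have herror (n : ℕ) : MemLp (fun ω => Zs n ω - Z ω -
        ∑ j ∈ Icc 2 (q - 1), cf j ω * (2 : ℝ) ^ (-(n : ℝ) * γ j)) 2 P :=
      ((hZs n).sub hZ).sub (memLp_finsetSum _ fun j _ => (hcf j).mul_const _)
    refine (isBigO_integral_of_integral_sq_le herror (c := c)
      (eventually_atTop.2 ⟨ℓ₀, fun n hn => ?_⟩)).congr_left fun n => ?_
    · convert hexp n hn using 2
      rw [← pow_mul, ← two_rpow_neg_natCast_mul]
      push_cast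
      ring_nf
    · exact integral_sub_sub_sum_mul _ _ ((hZs n).integrable one_le_two)
        (hZ.integrable one_le_two) fun j _ => (hcf j).integrable one_le_two
  have hbias : (fun k => richardsonMean q γ k r) =ᶠ[atTop] fun k =>
      (∑ ℓ : Fin k, reVec k q γ k ℓ * ∫ ω, Zs ((ℓ : ℕ) + 1) ω ∂P) - ∫ ω, Z ω ∂P := by
    refine eventually_atTop.2 ⟨q - 1 + 1, fun k hk => ?_⟩
    obtain ⟨k, rfl⟩ : ∃ k', k = k' + 1 := ⟨k - 1, by omega⟩
    dsimp only
    rw [sum_reVec_mul_eq_richardsonMean _ (fun n => ∫ ω, Zs n ω ∂P),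
      richardsonMean_sub_eq_richardsonMean_error
        (fun _ => pos_of_lt_succ_of_eq_zero hγ1 hmono) (by omega)]
  obtain ⟨C, hC, hbound⟩ :=
    bound_of_isBigO_nat_atTop ((richardsonMean_isBigO hρ hr).congr' hbias EventuallyEq.rfl)
  refine ⟨C, hC, fun k _ => ?_⟩
  have hk := hbound (pow_pos hρ k).ne'
  rwa [Real.norm_eq_abs, Real.norm_of_nonneg (pow_pos hρ k).le, ← two_rpow_neg_natCast_mul] at hk

/-- Bias estimate (RE, M1) of Lemma 3.5: under the pathwise asymptotic expansion
`Z_ℓ = Z + ∑_{j=2}^{q−1} c_j 2^{−ℓγ^j} + O_{L²}(2^{−ℓγ^q})`, the Richardson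
extrapolated means satisfy `|∑_{ℓ=1}^k v^{k,q}_ℓ E[Z_ℓ] − E[Z]| ≤ c'·2^{−kγ^q}`. -/
theorem stmt_7 {Ω : Type*} [MeasurableSpace Ω] (P : Measure Ω) [IsProbabilityMeasure P]
    (q : ℕ) (hq : 1 ≤ q) (γ : ℕ → ℝ) (hγ1 : γ 1 = 0)
    (hmono : ∀ j, 1 ≤ j → j < q → γ j < γ (j + 1))
    (Z : Ω → ℝ) (Zs : ℕ → Ω → ℝ) (cf : ℕ → Ω → ℝ)
    (hZ : MemLp Z 2 P) (hZs : ∀ ℓ, MemLp (Zs ℓ) 2 P)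
    (hcf : ∀ j, MemLp (cf j) 2 P)
    (c : ℝ) (hc : 0 < c) (ℓ₀ : ℕ)
    (hexp : ∀ ℓ : ℕ, ℓ₀ ≤ ℓ →
      ∫ ω, (Zs ℓ ω - Z ω -
          ∑ j ∈ Finset.Icc 2 (q - 1), cf j ω * (2 : ℝ) ^ (-(ℓ : ℝ) * γ j)) ^ 2 ∂P
        ≤ c * (2 : ℝ) ^ (-2 * (ℓ : ℝ) * γ q)) :
    ∃ c' > 0, ∀ k : ℕ, 1 ≤ k →
      |(∑ ℓ : Fin k, reVec k q γ k ℓ * ∫ ω, Zs ((ℓ : ℕ) + 1) ω ∂P) - ∫ ω, Z ω ∂P|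
        ≤ c' * (2 : ℝ) ^ (-(k : ℝ) * γ q) :=
  stmt_7_general P q γ hγ1 hmono Z Zs cf hZ hZs hcf c ℓ₀ hexp
end

section
/- Under the pathwise asymptotic expansion assumption (Z_ℓ = Z + Σ_{j=2}^{q−1} c_j 2^{−ℓγ^j} + O_{L²}(2^{−ℓγ^q}) with 0 = γ¹ < … < γ^q and square-integrable c_j), the Richardson extrapolation differences satisfy Var(Σ_ℓ (v^{k,q}_ℓ − v^{k−1,q}_ℓ) Z_ℓ) ≤ c·2^{−2kγ^q} for all k, with c independent of k. -/
open Finset MeasureTheory ProbabilityTheory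

/-!
The weights `v^{k,q}` sum to one, and their generating polynomials `∑_ℓ v^{k,q}_ℓ x^{ℓ+1}`
vanish at `x = 2^{-γ^j}` for every `2 ≤ j < q` with `j ≤ k`: each extrapolation step multiplies
the polynomial by `(2^{γ^j} x - 1)/(2^{γ^j} - 1)`. Hence for `k ≥ q` the difference
`w = v^{k,q} - v^{k-1,q}` annihilates both `Z` and every term `c_j 2^{-ℓγ^j}`, and the sum reduces
to `∑_ℓ w_ℓ R_{ℓ+1}` with `R` the `L²` remainder of the expansion. The weights have `ℓ¹`-norm
bounded independently of `k` and live on the last `q + 2` levels, where `‖R_ℓ‖₂ ≲ 2^{-kγ^q}`, so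
Cauchy–Schwarz gives the bound for large `k`; the finitely many small `k` only enlarge the constant.
-/
section RichardsonWeights

variable {L q : ℕ} {γ : ℕ → ℝ}

lemma reShift_succ {n : ℕ} (v : Fin (n + 1) → ℝ) (i : Fin n) :
    reShift v i.succ = v i.castSucc := by
  simp [reShift]
  rfl

lemma sum_reShift_mul {n : ℕ} (v : Fin (n + 1) → ℝ) (f : ℕ → ℝ) (hv : v (Fin.last n) = 0) :
    ∑ ℓ, reShift v ℓ * f ℓ = ∑ ℓ, v ℓ * f ((ℓ : ℕ) + 1) := by
  rw [Fin.sum_univ_succ, Fin.sum_univ_castSucc]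
  simp only [reShift_succ, hv]
  simp [reShift]

lemma sum_abs_reShift_le (v : Fin L → ℝ) : ∑ ℓ, |reShift v ℓ| ≤ ∑ ℓ, |v ℓ| := by
  cases L with
  | zero => simp
  | succ n =>
    rw [Fin.sum_univ_succ, Fin.sum_univ_castSucc]
    simp only [reShift_succ]
    simp [reShift]

lemma reVec_eq_zero_of_le : ∀ {m : ℕ} {ℓ : Fin L}, m ≤ ℓ → reVec L q γ m ℓ = 0
  | 0, _, _ => rfl
  | 1, ℓ, h => if_neg (by omega)
  | m + 2, ℓ, h => by
    have hshift : reShift (reVec L q γ (m + 1)) ℓ = 0 := by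
      unfold reShift
      split_ifs
      · rfl
      · exact reVec_eq_zero_of_le (by simp; omega)
    rw [reVec]
    split_ifs
    · simp [hshift, reVec_eq_zero_of_le (m := m + 1) (ℓ := ℓ) (by omega)]
    · exact hshift

lemma reVec_eq_zero_of_lt : ∀ {m : ℕ} {ℓ : Fin L}, (ℓ : ℕ) + q + 1 < m → reVec L q γ m ℓ = 0
  | 0, _, _ => rfl
  | 1, _, h => by omega
  | m + 2, ℓ, h => by
    rw [reVec, if_neg (by omega)]
    unfold reShift
    split_ifs
    · rfl
    · exact reVec_eq_zero_of_lt (by simp; omega)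

lemma sum_reVec_one_mul_pow (hL : 1 ≤ L) (x : ℝ) :
    ∑ ℓ : Fin L, reVec L q γ 1 ℓ * x ^ ((ℓ : ℕ) + 1) = x := by
  obtain ⟨n, rfl⟩ := Nat.exists_eq_add_of_le' hL
  simp [reVec]

lemma sum_reVec_succ_succ_mul_pow {m : ℕ} (hL : m + 2 ≤ L) (x : ℝ) :
    ∑ ℓ : Fin L, reVec L q γ (m + 2) ℓ * x ^ ((ℓ : ℕ) + 1) =
      (if m + 2 < q then ((2 : ℝ) ^ γ (m + 2) - 1)⁻¹ * ((2 : ℝ) ^ γ (m + 2) * x - 1) else x) *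
        ∑ ℓ : Fin L, reVec L q γ (m + 1) ℓ * x ^ ((ℓ : ℕ) + 1) := by
  obtain ⟨n, rfl⟩ : ∃ n, L = n + 1 := ⟨L - 1, by omega⟩
  have hshift : ∑ ℓ, reShift (reVec (n + 1) q γ (m + 1)) ℓ * x ^ ((ℓ : ℕ) + 1) =
      x * ∑ ℓ, reVec (n + 1) q γ (m + 1) ℓ * x ^ ((ℓ : ℕ) + 1) := by
    rw [sum_reShift_mul _ (fun i => x ^ (i + 1)) (reVec_eq_zero_of_le (by simp; omega)),
      Finset.mul_sum]
    exact Finset.sum_congr rfl fun ℓ _ => by ring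
  rw [reVec]
  split_ifs
  · simp only [Pi.smul_apply, Pi.sub_apply, smul_eq_mul, mul_sub, sub_mul, Finset.sum_sub_distrib,
      mul_assoc, ← Finset.mul_sum, hshift]
    ring
  · exact hshift

lemma sum_reVec_mul_pow_eq_zero {j : ℕ} (hj : 2 ≤ j) (hjq : j < q) {m : ℕ} (hjm : j ≤ m)
    (hL : m ≤ L) : ∑ ℓ : Fin L, reVec L q γ m ℓ * ((2 : ℝ) ^ (-γ j)) ^ ((ℓ : ℕ) + 1) = 0 := by
  induction m, hjm using Nat.le_induction with
  | base =>
    obtain ⟨i, rfl⟩ := Nat.exists_eq_add_of_le' hj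
    rw [sum_reVec_succ_succ_mul_pow hL, if_pos hjq, ← Real.rpow_add two_pos, add_neg_cancel,
      Real.rpow_zero, sub_self, mul_zero, zero_mul]
  | succ m hjm ih =>
    obtain ⟨i, rfl⟩ := Nat.exists_eq_add_of_le' (hj.trans hjm)
    rw [sum_reVec_succ_succ_mul_pow hL, ih (by omega), mul_zero]

lemma sum_reVec (hpos : ∀ j, 2 ≤ j → j < q → 0 < γ j) :
    ∀ {m : ℕ}, 1 ≤ m → m ≤ L → ∑ ℓ : Fin L, reVec L q γ m ℓ = 1
  | 1, _, hL => by simpa using sum_reVec_one_mul_pow (q := q) (γ := γ) hL 1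
  | m + 2, _, hL => by
    have hrec := sum_reVec_succ_succ_mul_pow (q := q) (γ := γ) hL 1
    simp only [one_pow, mul_one] at hrec
    rw [hrec, sum_reVec hpos (m := m + 1) (by omega) (by omega), mul_one]
    split_ifs with h
    · have hb := Real.one_lt_rpow one_lt_two (hpos (m + 2) (by omega) h)
      exact inv_mul_cancel₀ (sub_ne_zero.mpr hb.ne')
    · rfl

noncomputable def reGrowth (q : ℕ) (γ : ℕ → ℝ) : ℝ :=
  1 + ∑ j ∈ Icc 2 (q - 1), ((2 : ℝ) ^ γ j + 1) / ((2 : ℝ) ^ γ j - 1)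

lemma reGrowth_term_nonneg (hpos : ∀ j, 2 ≤ j → j < q → 0 < γ j) :
    ∀ j ∈ Icc 2 (q - 1), 0 ≤ ((2 : ℝ) ^ γ j + 1) / ((2 : ℝ) ^ γ j - 1) := by
  intro j hj
  rw [Finset.mem_Icc] at hj
  have := Real.one_lt_rpow one_lt_two (hpos j hj.1 (by omega))
  exact div_nonneg (by linarith) (by linarith)

lemma one_le_reGrowth (hpos : ∀ j, 2 ≤ j → j < q → 0 < γ j) : 1 ≤ reGrowth q γ :=
  le_add_of_nonneg_right (Finset.sum_nonneg (reGrowth_term_nonneg hpos))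

lemma le_reGrowth (hpos : ∀ j, 2 ≤ j → j < q → 0 < γ j) {j : ℕ} (hj : 2 ≤ j) (hjq : j < q) :
    ((2 : ℝ) ^ γ j + 1) / ((2 : ℝ) ^ γ j - 1) ≤ reGrowth q γ :=
  (Finset.single_le_sum (reGrowth_term_nonneg hpos) (Finset.mem_Icc.mpr ⟨hj, by omega⟩)).trans
    (le_add_of_nonneg_left zero_le_one)

lemma sum_abs_extrapolate_le {b : ℝ} (hb : 1 < b) (v : Fin L → ℝ) :
    ∑ ℓ, |((b - 1)⁻¹ • (b • reShift v - v)) ℓ| ≤ (b + 1) / (b - 1) * ∑ ℓ, |v ℓ| := by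
  have hb1 : 0 < b - 1 := by linarith
  calc ∑ ℓ, |((b - 1)⁻¹ • (b • reShift v - v)) ℓ|
      ≤ ∑ ℓ, (b - 1)⁻¹ * (b * |reShift v ℓ| + |v ℓ|) := by
        refine Finset.sum_le_sum fun ℓ _ => ?_
        simp only [Pi.smul_apply, Pi.sub_apply, smul_eq_mul, abs_mul, abs_of_pos (inv_pos.mpr hb1)]
        gcongr
        exact (abs_sub _ _).trans_eq (by rw [abs_mul, abs_of_pos (by linarith : (0 : ℝ) < b)])
    _ = (b - 1)⁻¹ * (b * ∑ ℓ, |reShift v ℓ| + ∑ ℓ, |v ℓ|) := by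
        rw [← Finset.mul_sum, Finset.sum_add_distrib, ← Finset.mul_sum]
    _ ≤ (b - 1)⁻¹ * (b * ∑ ℓ, |v ℓ| + ∑ ℓ, |v ℓ|) := by
        have := sum_abs_reShift_le v
        gcongr
    _ = (b + 1) / (b - 1) * ∑ ℓ, |v ℓ| := by ring

lemma sum_abs_reVec_le (hpos : ∀ j, 2 ≤ j → j < q → 0 < γ j) :
    ∀ m, ∑ ℓ : Fin L, |reVec L q γ m ℓ| ≤ reGrowth q γ ^ min m q
  | 0 => by simp [reVec]
  | 1 => by
    cases L with
    | zero => simpa using pow_nonneg (zero_le_one.trans (one_le_reGrowth hpos)) _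
    | succ n => simpa [Fin.sum_univ_succ, reVec] using one_le_pow₀ (one_le_reGrowth hpos)
  | m + 2 => by
    have ih := sum_abs_reVec_le hpos (m + 1)
    rw [reVec]
    split_ifs with h
    · have hb := Real.one_lt_rpow one_lt_two (hpos (m + 2) (by omega) h)
      rw [min_eq_left (by omega)] at ih ⊢
      calc _ ≤ _ := sum_abs_extrapolate_le hb _
        _ ≤ reGrowth q γ * reGrowth q γ ^ (m + 1) := by
          have := le_reGrowth hpos (by omega : 2 ≤ m + 2) h
          have := one_le_reGrowth hpos
          gcongr
        _ = reGrowth q γ ^ (m + 2) := (pow_succ' _ _).symm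
    · calc _ ≤ _ := sum_abs_reShift_le _
        _ ≤ _ := ih
        _ ≤ _ := pow_le_pow_right₀ (one_le_reGrowth hpos) (by omega)

lemma sum_reVec_sub_reVec_pred (hpos : ∀ j, 2 ≤ j → j < q → 0 < γ j) {m : ℕ} (hm : 2 ≤ m)
    (hL : m ≤ L) : ∑ ℓ : Fin L, (reVec L q γ m ℓ - reVec L q γ (m - 1) ℓ) = 0 := by
  rw [Finset.sum_sub_distrib, sum_reVec hpos (by omega) hL, sum_reVec hpos (by omega) (by omega),
    sub_self]

lemma sum_reVec_sub_reVec_pred_mul_pow_eq_zero {j m : ℕ} (hj : j ∈ Icc 2 (q - 1)) (hqm : q ≤ m)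
    (hL : m ≤ L) :
    ∑ ℓ : Fin L, (reVec L q γ m ℓ - reVec L q γ (m - 1) ℓ) * ((2 : ℝ) ^ (-γ j)) ^ ((ℓ : ℕ) + 1) =
      0 := by
  rw [Finset.mem_Icc] at hj
  simp only [sub_mul, Finset.sum_sub_distrib]
  rw [sum_reVec_mul_pow_eq_zero hj.1 (by omega) (by omega) hL,
    sum_reVec_mul_pow_eq_zero hj.1 (by omega) (by omega) (by omega), sub_self]

lemma reVec_sub_reVec_pred_eq_zero_of_lt {m : ℕ} {ℓ : Fin L} (h : (ℓ : ℕ) + q + 2 < m) :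
    reVec L q γ m ℓ - reVec L q γ (m - 1) ℓ = 0 := by
  rw [reVec_eq_zero_of_lt (by omega), reVec_eq_zero_of_lt (by omega), sub_self]

lemma sum_abs_reVec_sub_reVec_pred_le (hpos : ∀ j, 2 ≤ j → j < q → 0 < γ j) (m : ℕ) :
    ∑ ℓ : Fin L, |reVec L q γ m ℓ - reVec L q γ (m - 1) ℓ| ≤ 2 * reGrowth q γ ^ q := by
  have h1 := one_le_reGrowth hpos
  calc ∑ ℓ : Fin L, |reVec L q γ m ℓ - reVec L q γ (m - 1) ℓ|
      ≤ ∑ ℓ : Fin L, |reVec L q γ m ℓ| + ∑ ℓ : Fin L, |reVec L q γ (m - 1) ℓ| := by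
        rw [← Finset.sum_add_distrib]
        exact Finset.sum_le_sum fun ℓ _ => abs_sub _ _
    _ ≤ reGrowth q γ ^ min m q + reGrowth q γ ^ min (m - 1) q :=
        add_le_add (sum_abs_reVec_le hpos m) (sum_abs_reVec_le hpos (m - 1))
    _ ≤ 2 * reGrowth q γ ^ q := by
        linarith [pow_le_pow_right₀ h1 (min_le_right m q),
          pow_le_pow_right₀ h1 (min_le_right (m - 1) q)]

end RichardsonWeights

lemma sum_mul_expansion_eq {ι κ : Type*} [Fintype ι] (s : Finset κ) (w : ι → ℝ) (z : ℝ)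
    (c : κ → ℝ) (e : κ → ι → ℝ) (r : ι → ℝ) (h0 : ∑ i, w i = 0)
    (he : ∀ j ∈ s, ∑ i, w i * e j i = 0) :
    ∑ i, w i * (z + ∑ j ∈ s, c j * e j i + r i) = ∑ i, w i * r i := by
  have hcancel : ∑ i, w i * ∑ j ∈ s, c j * e j i = 0 := by
    simp only [Finset.mul_sum]
    rw [Finset.sum_comm]
    refine Finset.sum_eq_zero fun j hj => ?_
    simp only [mul_left_comm (w _), ← Finset.mul_sum, he j hj, mul_zero]
  simp only [mul_add, Finset.sum_add_distrib, ← Finset.sum_mul, h0, zero_mul, zero_add, hcancel]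

lemma sq_sum_mul_le {ι : Type*} (s : Finset ι) (a x : ι → ℝ) :
    (∑ i ∈ s, a i * x i) ^ 2 ≤ (∑ i ∈ s, |a i|) * ∑ i ∈ s, |a i| * x i ^ 2 :=
  Finset.sum_sq_le_sum_mul_sum_of_sq_le_mul s (fun i _ => abs_nonneg _)
    (fun i _ => mul_nonneg (abs_nonneg _) (sq_nonneg _))
    (fun i _ => by rw [mul_pow, ← sq_abs (a i)]; exact le_of_eq (by ring))

section Integrals

variable {Ω : Type*} [MeasurableSpace Ω] {P : Measure Ω}

lemma integral_sq_sum_mul_le {ι : Type*} (s : Finset ι) (a : ι → ℝ) (f : ι → Ω → ℝ)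
    (hf : ∀ i ∈ s, Integrable (fun ω => f i ω ^ 2) P) :
    ∫ ω, (∑ i ∈ s, a i * f i ω) ^ 2 ∂P ≤
      (∑ i ∈ s, |a i|) * ∑ i ∈ s, |a i| * ∫ ω, f i ω ^ 2 ∂P := by
  have hint : Integrable (fun ω => ∑ i ∈ s, |a i| * f i ω ^ 2) P :=
    integrable_finsetSum s fun i hi => (hf i hi).const_mul _
  calc ∫ ω, (∑ i ∈ s, a i * f i ω) ^ 2 ∂P
      ≤ ∫ ω, (∑ i ∈ s, |a i|) * ∑ i ∈ s, |a i| * f i ω ^ 2 ∂P :=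
        integral_mono_of_nonneg (ae_of_all _ fun _ => sq_nonneg _) (hint.const_mul _)
          (ae_of_all _ fun ω => sq_sum_mul_le s a (f · ω))
    _ = _ := by
        rw [integral_const_mul, integral_finsetSum s fun i hi => (hf i hi).const_mul _]
        simp only [integral_const_mul]

lemma integral_sq_sum_mul_succ_le {k s ℓ₀ : ℕ} (w : Fin k → ℝ) (R : ℕ → Ω → ℝ) {a c : ℝ}
    (hc : 0 ≤ c) (hR : ∀ ℓ, MemLp (R ℓ) 2 P)
    (hRc : ∀ ℓ : ℕ, ℓ₀ ≤ ℓ → ∫ ω, R ℓ ω ^ 2 ∂P ≤ c * (2 : ℝ) ^ (-2 * (ℓ : ℝ) * a))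
    (hw : ∀ ℓ, w ℓ ≠ 0 → k ≤ (ℓ : ℕ) + 1 + s) (hk : ℓ₀ + s ≤ k) :
    ∫ ω, (∑ ℓ, w ℓ * R ((ℓ : ℕ) + 1) ω) ^ 2 ∂P ≤
      (∑ ℓ, |w ℓ|) ^ 2 * (c * (2 : ℝ) ^ (2 * (s : ℝ) * |a|)) * (2 : ℝ) ^ (-2 * (k : ℝ) * a) := by
  set K := c * (2 : ℝ) ^ (2 * (s : ℝ) * |a|) * (2 : ℝ) ^ (-2 * (k : ℝ) * a)
  have hterm : ∀ ℓ : Fin k, |w ℓ| * ∫ ω, R ((ℓ : ℕ) + 1) ω ^ 2 ∂P ≤ |w ℓ| * K := by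
    intro ℓ
    rcases eq_or_ne (w ℓ) 0 with h | h
    · simp [h]
    have hℓ := hw ℓ h
    have hexp : -2 * (((ℓ : ℕ) + 1 : ℕ) : ℝ) * a ≤ 2 * (s : ℝ) * |a| + -2 * (k : ℝ) * a := by
      have hd : (k : ℝ) ≤ (ℓ : ℕ) + 1 + s := by exact_mod_cast hℓ
      have hd' : ((ℓ : ℕ) : ℝ) + 1 ≤ k := by exact_mod_cast ℓ.2
      push_cast
      nlinarith [le_abs_self a, abs_nonneg a]
    gcongr
    calc ∫ ω, R ((ℓ : ℕ) + 1) ω ^ 2 ∂P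
        ≤ c * (2 : ℝ) ^ (-2 * (((ℓ : ℕ) + 1 : ℕ) : ℝ) * a) := hRc _ (by omega)
      _ ≤ c * (2 : ℝ) ^ (2 * (s : ℝ) * |a| + -2 * (k : ℝ) * a) := by gcongr; exact one_le_two
      _ = K := by rw [Real.rpow_add two_pos]; exact (mul_assoc _ _ _).symm
  calc ∫ ω, (∑ ℓ, w ℓ * R ((ℓ : ℕ) + 1) ω) ^ 2 ∂P
      ≤ (∑ ℓ, |w ℓ|) * ∑ ℓ, |w ℓ| * ∫ ω, R ((ℓ : ℕ) + 1) ω ^ 2 ∂P :=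
        integral_sq_sum_mul_le _ w _ fun ℓ _ => (hR _).integrable_sq
    _ ≤ (∑ ℓ, |w ℓ|) * ∑ ℓ, |w ℓ| * K :=
        mul_le_mul_of_nonneg_left (Finset.sum_le_sum fun ℓ _ => hterm ℓ)
          (Finset.sum_nonneg fun ℓ _ => abs_nonneg (w ℓ))
    _ = (∑ ℓ, |w ℓ|) ^ 2 * K := by rw [← Finset.sum_mul]; ring
    _ = _ := by simp only [K, mul_assoc]

end Integrals

lemma pos_of_lt_succ_of_apply_one_eq_zero {q : ℕ} {γ : ℕ → ℝ} (hγ1 : γ 1 = 0)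
    (hmono : ∀ j, 1 ≤ j → j < q → γ j < γ (j + 1)) : ∀ j, 2 ≤ j → j < q → 0 < γ j := by
  intro j hj hjq
  induction j, hj using Nat.le_induction with
  | base => simpa [hγ1] using hmono 1 le_rfl (by omega)
  | succ j hj ih => exact (ih (by omega)).trans (hmono j (by omega) (by omega))

lemma exists_pos_forall_le_mul_of_forall_ge {f g : ℕ → ℝ} (hg : ∀ k, 0 < g k) {C : ℝ} {K : ℕ}
    (h : ∀ k, K ≤ k → f k ≤ C * g k) : ∃ c > 0, ∀ k, f k ≤ c * g k := by
  set S := ∑ n ∈ Finset.range K, |f n| / g n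
  have hS : 0 ≤ S := Finset.sum_nonneg fun n _ => div_nonneg (abs_nonneg _) (hg n).le
  refine ⟨max C 0 + S + 1, by positivity, fun k => ?_⟩
  have hle : ∀ b, b ≤ max C 0 + S + 1 → f k ≤ b * g k → f k ≤ (max C 0 + S + 1) * g k :=
    fun b hb hfb => hfb.trans (mul_le_mul_of_nonneg_right hb (hg k).le)
  rcases lt_or_ge k K with hk | hk
  · refine hle (|f k| / g k) ?_ ?_
    · have := Finset.single_le_sum (fun n _ => div_nonneg (abs_nonneg (f n)) (hg n).le)
        (Finset.mem_range.mpr hk)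
      linarith [le_max_right C 0]
    · rw [div_mul_cancel₀ _ (hg k).ne']
      exact le_abs_self _
  · exact hle C (by linarith [le_max_left C 0]) (h k hk)

lemma variance_sum_reVec_sub_le {Ω : Type*} [MeasurableSpace Ω] {P : Measure Ω}
    [IsProbabilityMeasure P] {q : ℕ} {γ : ℕ → ℝ} (hpos : ∀ j, 2 ≤ j → j < q → 0 < γ j)
    (Z : Ω → ℝ) (Y R cf : ℕ → Ω → ℝ)
    (hY : ∀ ℓ ω, Y ℓ ω = Z ω + ∑ j ∈ Icc 2 (q - 1), cf j ω * ((2 : ℝ) ^ (-γ j)) ^ ℓ + R ℓ ω)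
    (hR : ∀ ℓ, MemLp (R ℓ) 2 P) {c : ℝ} (hc : 0 ≤ c) {ℓ₀ : ℕ}
    (hRc : ∀ ℓ : ℕ, ℓ₀ ≤ ℓ → ∫ ω, R ℓ ω ^ 2 ∂P ≤ c * (2 : ℝ) ^ (-2 * (ℓ : ℝ) * γ q))
    {k : ℕ} (hk : ℓ₀ + q + 2 ≤ k) :
    variance (fun ω => ∑ ℓ : Fin k,
        (reVec k q γ k ℓ - reVec k q γ (k - 1) ℓ) * Y ((ℓ : ℕ) + 1) ω) P ≤
      (2 * reGrowth q γ ^ q) ^ 2 * (c * (2 : ℝ) ^ (2 * ((q + 1 : ℕ) : ℝ) * |γ q|)) *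
        (2 : ℝ) ^ (-2 * (k : ℝ) * γ q) := by
  set w : Fin k → ℝ := fun ℓ => reVec k q γ k ℓ - reVec k q γ (k - 1) ℓ
  have hX : (fun ω => ∑ ℓ, w ℓ * Y ((ℓ : ℕ) + 1) ω) = fun ω => ∑ ℓ, w ℓ * R ((ℓ : ℕ) + 1) ω :=
    funext fun ω => by
      simp only [hY]
      exact sum_mul_expansion_eq _ w _ _ (fun j ℓ => ((2 : ℝ) ^ (-γ j)) ^ ((ℓ : ℕ) + 1)) _
        (sum_reVec_sub_reVec_pred hpos (by omega) le_rfl)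
        fun j hj => sum_reVec_sub_reVec_pred_mul_pow_eq_zero hj (by omega) le_rfl
  have hsupp : ∀ ℓ, w ℓ ≠ 0 → k ≤ (ℓ : ℕ) + 1 + (q + 1) := fun ℓ hℓ => by
    by_contra! hlt
    exact hℓ (reVec_sub_reVec_pred_eq_zero_of_lt (by omega))
  rw [hX]
  calc variance (fun ω => ∑ ℓ, w ℓ * R ((ℓ : ℕ) + 1) ω) P
      ≤ ∫ ω, (∑ ℓ, w ℓ * R ((ℓ : ℕ) + 1) ω) ^ 2 ∂P :=
        variance_le_expectation_sq (memLp_finsetSum _ fun ℓ _ =>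
          (hR _).const_mul (w ℓ)).aestronglyMeasurable
    _ ≤ (∑ ℓ, |w ℓ|) ^ 2 * (c * (2 : ℝ) ^ (2 * ((q + 1 : ℕ) : ℝ) * |γ q|)) *
          (2 : ℝ) ^ (-2 * (k : ℝ) * γ q) :=
        integral_sq_sum_mul_succ_le w R hc hR hRc hsupp (by omega)
    _ ≤ _ := by
        have := Finset.sum_nonneg fun ℓ (_ : ℓ ∈ Finset.univ) => abs_nonneg (w ℓ)
        have := sum_abs_reVec_sub_reVec_pred_le (L := k) hpos k
        gcongr

theorem stmt_8_general {Ω : Type*} [MeasurableSpace Ω] (P : Measure Ω) [IsProbabilityMeasure P]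
    (q : ℕ) (γ : ℕ → ℝ) (hγ1 : γ 1 = 0)
    (hmono : ∀ j, 1 ≤ j → j < q → γ j < γ (j + 1))
    (Z : Ω → ℝ) (Zs : ℕ → Ω → ℝ) (cf : ℕ → Ω → ℝ)
    (hZ : MemLp Z 2 P) (hZs : ∀ ℓ, MemLp (Zs ℓ) 2 P)
    (hcf : ∀ j, MemLp (cf j) 2 P)
    (c : ℝ) (hc : 0 < c) (ℓ₀ : ℕ)
    (hexp : ∀ ℓ : ℕ, ℓ₀ ≤ ℓ →
      ∫ ω, (Zs ℓ ω - Z ω -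
          ∑ j ∈ Finset.Icc 2 (q - 1), cf j ω * (2 : ℝ) ^ (-(ℓ : ℝ) * γ j)) ^ 2 ∂P
        ≤ c * (2 : ℝ) ^ (-2 * (ℓ : ℝ) * γ q)) :
    ∃ c' > 0, ∀ k : ℕ, 1 ≤ k →
      variance
          (fun ω => ∑ ℓ : Fin k,
            (reVec k q γ k ℓ - reVec k q γ (k - 1) ℓ) * Zs ((ℓ : ℕ) + 1) ω) P
        ≤ c' * (2 : ℝ) ^ (-2 * (k : ℝ) * γ q) := by
  set R : ℕ → Ω → ℝ := fun ℓ ω =>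
    Zs ℓ ω - Z ω - ∑ j ∈ Finset.Icc 2 (q - 1), cf j ω * (2 : ℝ) ^ (-(ℓ : ℝ) * γ j)
  have hR : ∀ ℓ, MemLp (R ℓ) 2 P := fun ℓ =>
    ((hZs ℓ).sub hZ).sub (memLp_finsetSum _ fun j _ => (hcf j).mul_const _)
  have hZs_eq : ∀ ℓ ω, Zs ℓ ω =
      Z ω + ∑ j ∈ Icc 2 (q - 1), cf j ω * ((2 : ℝ) ^ (-γ j)) ^ ℓ + R ℓ ω := by
    intro ℓ ω
    simp only [R, ← Real.rpow_mul_natCast zero_le_two, mul_comm (-γ _), neg_mul_comm]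
    ring
  obtain ⟨c', hc', hbound⟩ := exists_pos_forall_le_mul_of_forall_ge
    (fun k => Real.rpow_pos_of_pos two_pos (-2 * (k : ℝ) * γ q))
    fun k hk => variance_sum_reVec_sub_le (pos_of_lt_succ_of_apply_one_eq_zero hγ1 hmono) Z Zs R cf
      hZs_eq hR hc.le hexp hk
  exact ⟨c', hc', fun k _ => hbound k⟩

/-- Variance estimate (RE, M2) of Lemma 3.5: under the pathwise asymptotic expansion
`Z_ℓ = Z + ∑_{j=2}^{q−1} c_j 2^{−ℓγ^j} + O_{L²}(2^{−ℓγ^q})`, the Richardson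
extrapolation differences satisfy
`Var(∑_ℓ (v^{k,q}_ℓ − v^{k−1,q}_ℓ) Z_ℓ) ≤ c'·2^{−2kγ^q}` for all `k ≥ 1`. -/
theorem stmt_8 {Ω : Type*} [MeasurableSpace Ω] (P : Measure Ω) [IsProbabilityMeasure P]
    (q : ℕ) (hq : 1 ≤ q) (γ : ℕ → ℝ) (hγ1 : γ 1 = 0)
    (hmono : ∀ j, 1 ≤ j → j < q → γ j < γ (j + 1))
    (Z : Ω → ℝ) (Zs : ℕ → Ω → ℝ) (cf : ℕ → Ω → ℝ)
    (hZ : MemLp Z 2 P) (hZs : ∀ ℓ, MemLp (Zs ℓ) 2 P)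
    (hcf : ∀ j, MemLp (cf j) 2 P)
    (c : ℝ) (hc : 0 < c) (ℓ₀ : ℕ)
    (hexp : ∀ ℓ : ℕ, ℓ₀ ≤ ℓ →
      ∫ ω, (Zs ℓ ω - Z ω -
          ∑ j ∈ Finset.Icc 2 (q - 1), cf j ω * (2 : ℝ) ^ (-(ℓ : ℝ) * γ j)) ^ 2 ∂P
        ≤ c * (2 : ℝ) ^ (-2 * (ℓ : ℝ) * γ q)) :
    ∃ c' > 0, ∀ k : ℕ, 1 ≤ k →
      variance
          (fun ω => ∑ ℓ : Fin k,
            (reVec k q γ k ℓ - reVec k q γ (k - 1) ℓ) * Zs ((ℓ : ℕ) + 1) ω) P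
        ≤ c' * (2 : ℝ) ^ (-2 * (k : ℝ) * γ q) :=
  stmt_8_general P q γ hγ1 hmono Z Zs cf hZ hZs hcf c hc ℓ₀ hexp
end

section
/- Let s < t ≤ q and let v^{k,s}, v^{k,t} ∈ ℝ^L be the Richardson extrapolation vectors for the respective orders (with the same rates γ^j). Write v^{L,t} = Σ_{k=1}^L a_k (v^{k,s} − v^{k−1,s}) in the basis of differences. Then the coefficients satisfy a_k = a_{k+1} for all k = 1,…,L−t, and consequently the a_k are bounded: |a_k| ≤ c with c independent of k and of L. -/
open Finset

open Polynomial

theorem linearIndependent_of_isUpperTriangular {ι R : Type*} [Fintype ι] [LinearOrder ι]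
    [CommRing R] [IsDomain R] {v : ι → ι → R} (hv : ∀ i j, j < i → v j i = 0)
    (hdiag : ∀ i, v i i ≠ 0) : LinearIndependent R v := by
  set M : Matrix ι ι R := Matrix.of fun i j => v j i
  have hM : M.IsUpperTriangular := fun i j hij => hv i j hij
  refine Matrix.linearIndependent_cols_of_det_ne_zero (A := M) ?_
  rw [Matrix.det_of_isUpperTriangular hM]
  exact prod_ne_zero_iff.2 fun i _ => hdiag i

theorem sum_range_ite_lt_sub {M : Type*} [AddCommGroup M] (f : ℕ → M) {m n : ℕ} (h : m ≤ n) :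
    ∑ k ∈ range n, (if k < m then f (k + 1) - f k else 0) = f m - f 0 := by
  rw [← sum_filter, show (range n).filter (· < m) = range m by ext; simp only [mem_filter, mem_range]; omega, sum_range_sub]

theorem sum_range_smul_eq_sum_range_smul_sub {R M : Type*} [Ring R] [AddCommGroup M] [Module R M]
    (f : ℕ → M) (hf : f 0 = 0) (c : ℕ → R) {m n L : ℕ} (h : m + n ≤ L + 1) :
    ∑ i ∈ range n, c i • f (m + i) =
      ∑ k ∈ range L, (∑ i ∈ range n, if k < m + i then c i else 0) • (f (k + 1) - f k) := by
  simp_rw [sum_smul]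
  rw [sum_comm]
  refine sum_congr rfl fun i hi => ?_
  rw [mem_range] at hi
  calc c i • f (m + i) = c i • ∑ k ∈ range L, if k < m + i then f (k + 1) - f k else 0 := by
        rw [sum_range_ite_lt_sub f (by omega), hf, sub_zero]
    _ = _ := by rw [smul_sum]; congr! 1 with k; split_ifs <;> simp

def reShiftₗ (L : ℕ) : Module.End ℝ (Fin L → ℝ) where
  toFun := reShift
  map_add' u v := by funext ℓ; simp only [reShift, Pi.add_apply]; split_ifs <;> simp
  map_smul' c v := by
    funext ℓ; simp only [reShift, Pi.smul_apply, smul_eq_mul, RingHom.id_apply]; split_ifs <;> simp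

@[simp] theorem reShiftₗ_apply {L : ℕ} (v : Fin L → ℝ) : reShiftₗ L v = reShift v := rfl

theorem reShift_apply_eq_zero {L m : ℕ} {v : Fin L → ℝ} (hv : ∀ ℓ : Fin L, m ≤ ℓ → v ℓ = 0)
    (ℓ : Fin L) (hℓ : m + 1 ≤ ℓ) : reShift v ℓ = 0 := by
  rw [reShift, if_neg (by omega)]
  exact hv _ (by dsimp only; omega)

noncomputable def reFactor (γ : ℕ → ℝ) (j : ℕ) : ℝ[X] :=
  C ((2 : ℝ) ^ γ j - 1)⁻¹ * (C ((2 : ℝ) ^ γ j) * X - 1)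

theorem natDegree_reFactor_le (γ : ℕ → ℝ) (j : ℕ) : (reFactor γ j).natDegree ≤ 1 := by
  unfold reFactor; compute_degree

theorem aeval_reFactor_apply {L : ℕ} (γ : ℕ → ℝ) (j : ℕ) (v : Fin L → ℝ) :
    aeval (reShiftₗ L) (reFactor γ j) v =
      ((2 : ℝ) ^ γ j - 1)⁻¹ • ((2 : ℝ) ^ γ j • reShift v - v) := by
  simp [reFactor, Algebra.algebraMap_eq_smul_one]

noncomputable def reTransition (γ : ℕ → ℝ) (s t : ℕ) : ℝ[X] := ∏ j ∈ Ico s t, reFactor γ j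

theorem natDegree_reTransition_le (γ : ℕ → ℝ) (s t : ℕ) :
    (reTransition γ s t).natDegree ≤ t - s := by
  refine (natDegree_prod_le _ _).trans ?_
  simpa using sum_le_card_nsmul (Ico s t) _ 1 fun j _ => natDegree_reFactor_le γ j

section reVec

variable {L q : ℕ} {γ : ℕ → ℝ}

theorem reVec_succ_of_lt {k : ℕ} (hk : 1 ≤ k) (hkq : k + 1 < q) :
    reVec L q γ (k + 1) = aeval (reShiftₗ L) (reFactor γ (k + 1)) (reVec L q γ k) := by
  obtain ⟨k, rfl⟩ := Nat.exists_eq_add_of_le' hk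
  rw [aeval_reFactor_apply, reVec, if_pos hkq]

theorem reVec_succ_of_le {k : ℕ} (hk : 1 ≤ k) (hqk : q ≤ k + 1) :
    reVec L q γ (k + 1) = reShift (reVec L q γ k) := by
  obtain ⟨k, rfl⟩ := Nat.exists_eq_add_of_le' hk
  rw [reVec, if_neg (by omega)]

theorem reVec_congr {q' : ℕ} :
    ∀ {k : ℕ}, (∀ j, 2 ≤ j → j ≤ k → (j < q ↔ j < q')) → reVec L q γ k = reVec L q' γ k
  | 0, _ => rfl
  | 1, _ => rfl
  | k + 2, h => by
    simp only [reVec, h (k + 2) (by omega) le_rfl,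
      reVec_congr (k := k + 1) fun j hj hjk => h j hj (by omega)]

theorem reVec_max_two : reVec L (max q 2) γ = reVec L q γ :=
  funext fun _ => reVec_congr fun j hj _ => by omega

theorem reVec_apply_eq_zero : ∀ {k : ℕ} (ℓ : Fin L), k ≤ ℓ → reVec L q γ k ℓ = 0
  | 0, _, _ => rfl
  | 1, ℓ, hℓ => if_neg (by omega)
  | k + 2, ℓ, hℓ => by
    have hk : ∀ ℓ : Fin L, k + 1 ≤ ℓ → reVec L q γ (k + 1) ℓ = 0 :=
      fun ℓ hℓ => reVec_apply_eq_zero ℓ hℓ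
    by_cases hkq : k + 2 < q
    · simp [reVec_succ_of_lt (by omega : 1 ≤ k + 1) hkq, aeval_reFactor_apply,
        reShift_apply_eq_zero hk ℓ hℓ, hk ℓ (by omega)]
    · rw [reVec_succ_of_le (by omega) (by omega), reShift_apply_eq_zero hk ℓ hℓ]

theorem reVec_succ_apply_ne_zero (hγ : ∀ j, 2 ≤ j → j < q → (2 : ℝ) ^ γ j ≠ 1) :
    ∀ {k : ℕ} (hk : k < L), reVec L q γ (k + 1) ⟨k, hk⟩ ≠ 0
  | 0, _ => by simp [reVec]
  | k + 1, hk => by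
    have hshift : reShift (reVec L q γ (k + 1)) ⟨k + 1, hk⟩ ≠ 0 :=
      reVec_succ_apply_ne_zero hγ (by omega)
    by_cases hkq : k + 2 < q
    · have hA : (2 : ℝ) ^ γ (k + 2) - 1 ≠ 0 := sub_ne_zero.2 (hγ _ (by omega) hkq)
      simp [reVec_succ_of_lt (by omega : 1 ≤ k + 1) hkq, aeval_reFactor_apply, hA, hshift,
        reVec_apply_eq_zero (q := q) (γ := γ) (⟨k + 1, hk⟩ : Fin L) le_rfl,
        (Real.rpow_pos_of_pos two_pos (γ (k + 2))).ne']
    · rwa [reVec_succ_of_le (by omega) (by omega)]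

theorem linearIndependent_reVec_sub (hγ : ∀ j, 2 ≤ j → j < q → (2 : ℝ) ^ γ j ≠ 1) :
    LinearIndependent ℝ fun k : Fin L => reVec L q γ (k + 1) - reVec L q γ k := by
  refine linearIndependent_of_isUpperTriangular (fun i j hij => ?_) fun i => ?_
  · simp [reVec_apply_eq_zero i (show (j : ℕ) + 1 ≤ i from hij),
      reVec_apply_eq_zero i (show (j : ℕ) ≤ i by omega)]
  · simpa [reVec_apply_eq_zero i le_rfl] using reVec_succ_apply_ne_zero hγ i.2

theorem reVec_eq_pow_apply {k m : ℕ} (hk : 1 ≤ k) (hqk : q ≤ k + 1) (hkm : k ≤ m) :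
    reVec L q γ m = (reShiftₗ L ^ (m - k)) (reVec L q γ k) := by
  induction m, hkm using Nat.le_induction with
  | base => simp
  | succ m hkm ih =>
    rw [reVec_succ_of_le (by omega) (by omega), ih, Nat.sub_add_comm hkm, pow_succ',
      Module.End.mul_apply, reShiftₗ_apply]

theorem reVec_eq_aeval_apply {k m : ℕ} (hk : 1 ≤ k) (hkm : k ≤ m) (hmq : m < q) :
    reVec L q γ m =
      aeval (reShiftₗ L) (∏ j ∈ Ico (k + 1) (m + 1), reFactor γ j) (reVec L q γ k) := by
  induction m, hkm using Nat.le_induction with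
  | base => simp
  | succ m hkm ih =>
    rw [reVec_succ_of_lt (by omega) hmq, ih (by omega),
      prod_Ico_succ_top (by omega : k + 1 ≤ m + 1), mul_comm, map_mul, Module.End.mul_apply]

theorem aeval_apply_reVec {p : ℝ[X]} {k n : ℕ} (hk : 1 ≤ k) (hqk : q ≤ k + 1)
    (hp : p.natDegree < n) :
    aeval (reShiftₗ L) p (reVec L q γ k) = ∑ i ∈ range n, p.coeff i • reVec L q γ (k + i) := by
  rw [aeval_eq_sum_range' hp, LinearMap.sum_apply]
  refine sum_congr rfl fun i _ => ?_
  rw [LinearMap.smul_apply, reVec_eq_pow_apply hk hqk (Nat.le_add_right k i),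
    Nat.add_sub_cancel_left]

theorem reVec_eq_aeval_reTransition_apply {s t : ℕ} (hs : 2 ≤ s) (hst : s ≤ t) (hL : t ≤ L + 1) :
    reVec L t γ L = aeval (reShiftₗ L) (reTransition γ s t) (reVec L s γ (L + s - t)) := by
  have hshift : reVec L t γ L = (reShiftₗ L ^ (L + 1 - t)) (reVec L t γ (t - 1)) := by
    rw [reVec_eq_pow_apply (k := t - 1) (by omega) (by omega) (by omega)]
    congr 2; omega
  have htransition : reVec L t γ (t - 1) =
      aeval (reShiftₗ L) (reTransition γ s t) (reVec L t γ (s - 1)) := by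
    rw [reVec_eq_aeval_apply (k := s - 1) (by omega) (by omega) (by omega), reTransition,
      Nat.sub_add_cancel (by omega : 1 ≤ s), Nat.sub_add_cancel (by omega : 1 ≤ t)]
  have hlow : reVec L t γ (s - 1) = reVec L s γ (s - 1) := reVec_congr fun j _ _ => by omega
  have hstart : reVec L s γ (L + s - t) = (reShiftₗ L ^ (L + 1 - t)) (reVec L s γ (s - 1)) := by
    rw [reVec_eq_pow_apply (k := s - 1) (by omega) (by omega) (by omega)]
    congr 2; omega
  have hcomm : Commute (reShiftₗ L ^ (L + 1 - t)) (aeval (reShiftₗ L) (reTransition γ s t)) := by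
    rw [← aeval_X_pow (R := ℝ)]
    exact (Commute.all _ _).map (aeval (reShiftₗ L))
  rw [hshift, htransition, hlow, hstart, ← Module.End.mul_apply, ← Module.End.mul_apply,
    hcomm.eq]

theorem reVec_eq_sum_coeff_smul {s t : ℕ} (hs : 2 ≤ s) (hst : s ≤ t) (hL : t ≤ L + 1) :
    reVec L t γ L =
      ∑ i ∈ range (t - s + 1), (reTransition γ s t).coeff i • reVec L s γ (L + s - t + i) := by
  rw [reVec_eq_aeval_reTransition_apply hs hst hL]
  exact aeval_apply_reVec (by omega) (by omega)
    (Nat.lt_succ_of_le (natDegree_reTransition_le γ s t))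

theorem eq_coeff_of_reVec_eq_sum {s t : ℕ} (hs : 2 ≤ s) (hst : s ≤ t) (hL : t ≤ L + 1)
    (hγ : ∀ j, 2 ≤ j → j < s → (2 : ℝ) ^ γ j ≠ 1) {a : Fin L → ℝ}
    (ha : reVec L t γ L = ∑ k : Fin L, a k • (reVec L s γ (k + 1) - reVec L s γ k)) (k : Fin L) :
    a k = ∑ i ∈ range (t - s + 1),
      if (k : ℕ) < L + s - t + i then (reTransition γ s t).coeff i else 0 := by
  have hb := (reVec_eq_sum_coeff_smul hs hst hL).trans
    (sum_range_smul_eq_sum_range_smul_sub (reVec L s γ) rfl _ (m := L + s - t) (L := L) (by omega))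
  rw [← Fin.sum_univ_eq_sum_range (fun k => (_ : ℝ) • (reVec L s γ (k + 1) - reVec L s γ k))] at hb
  exact Fintype.linearIndependent_iffₛ.1 (linearIndependent_reVec_sub hγ) _ _ (ha.symm.trans hb) k

end reVec

/-- Lemma 3.7: writing `v^{L,t} = ∑_{k=1}^L a_k (v^{k,s} − v^{k−1,s})` in the basis of
Richardson extrapolation differences (with `s < t ≤ q`), the coefficients satisfy
`a_k = a_{k+1}` for `k = 1,…,L−t`, and are bounded by a constant independent of `k`
and of `L`. -/
theorem stmt_10 (γ : ℕ → ℝ) (q s t : ℕ) (hst : s < t) (htq : t ≤ q)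
    (hγ1 : γ 1 = 0) (hmono : ∀ j, 1 ≤ j → j < q → γ j < γ (j + 1)) :
    ∃ c : ℝ, ∀ (L : ℕ) (hL : t ≤ L) (a : Fin L → ℝ),
      (reVec L t γ L
          = ∑ k : Fin L, a k • (reVec L s γ ((k : ℕ) + 1) - reVec L s γ (k : ℕ))) →
      (∀ (k : ℕ) (hk1 : 1 ≤ k) (hk : k ≤ L - t),
        a ⟨k - 1, by omega⟩ = a ⟨k, by omega⟩) ∧
      (∀ k, |a k| ≤ c) := by
  have hγmono : StrictMonoOn γ (Set.Icc 1 q) :=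
    strictMonoOn_of_lt_succ Set.ordConnected_Icc fun j _ hj hj' => by
      simpa using hmono j hj.1 (Order.succ_le_iff.1 hj'.2)
  have hγ : ∀ j, 2 ≤ j → j < max s 2 → (2 : ℝ) ^ γ j ≠ 1 := fun j hj hjs =>
    (Real.one_lt_rpow one_lt_two
      (hγ1 ▸ hγmono ⟨le_rfl, by omega⟩ ⟨by omega, by omega⟩ (by omega))).ne'
  refine ⟨∑ i ∈ range (max t 2 - max s 2 + 1),
    |(reTransition γ (max s 2) (max t 2)).coeff i|, fun L hL a ha => ?_⟩
  rw [← reVec_max_two (q := s), ← reVec_max_two (q := t)] at ha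
  have hcoeff := eq_coeff_of_reVec_eq_sum (le_max_right s 2) (by omega) (by omega) hγ ha
  refine ⟨fun k hk1 hk => ?_, fun k => ?_⟩
  · rw [hcoeff, hcoeff]
    refine sum_congr rfl fun i _ => ?_
    rw [if_pos (by simp only; omega), if_pos (by simp only; omega)]
  · rw [hcoeff]
    refine (abs_sum_le_sum_abs _ _).trans (sum_le_sum fun i _ => ?_)
    split_ifs <;> simp
end

section
/- Suppose for all k ≤ L and all L ∈ ℕ: α^L = Σ_{k=1}^L β^k with β^k supported on S^k, |(α^L)ᵀμ − E[Z]| ≤ c·2^{−Lγ_B}, (β^k)ᵀCβ^k ≤ c·2^{−kγ_V}, and W_k ≤ c·2^{kγ_C} with γ_C < γ_V. Then for every ε > 0 small enough there exist L and sample numbers m_1,…,m_L ∈ ℕ such that the linear unbiased estimator μ̂ = Σ_{k=1}^L Σ_{ℓ∈S^k} β^k_ℓ (1/m_k) Σ_{i=1}^{m_k} Z_ℓ(ω^k_i) achieves E[(μ̂ − E[Z])²] ≤ ε² with Cost(μ̂) = Σ_k m_k W_k ≤ c'(ε^{−γ_C/γ_B} + ε^{−2}). -/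
open Finset MeasureTheory ProbabilityTheory

/-!
Take the finest level `L` with `2^{L γ_B} ≈ 1/ε`: the bias is then at most `ε/2`, and one
sample on every level costs `∑_{k ≤ L} W_k = O(2^{L γ_C}) = O(ε^{-γ_C/γ_B})`. Because
`γ_C < γ_V`, the product `c² 2^{-k(γ_V - γ_C)}` of the variance and cost bounds decays
geometrically, so the sample numbers `m_k ≈ λ √(V_k / W_k)` with `λ ∝ ε^{-2}` give variance at
most `ε²/2` at cost `O(ε^{-2})`, uniformly in `L`. Rounding `m_k` up adds at most one sample
per level, which the first cost term already pays for.
-/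

lemma sum_Icc_pow_le_of_lt_one {r : ℝ} (h0 : 0 ≤ r) (h1 : r < 1) (L : ℕ) :
    ∑ k ∈ Icc 1 L, r ^ k ≤ r / (1 - r) := by
  rw [← Ico_add_one_right_eq_Icc]
  simpa using geom_sum_Ico_le_of_lt_one (m := 1) (n := L + 1) h0 h1

lemma sum_Icc_pow_le_of_one_lt {q : ℝ} (h1 : 1 < q) (L : ℕ) :
    ∑ k ∈ Icc 1 L, q ^ k ≤ q ^ (L + 1) / (q - 1) := by
  rw [← Ico_add_one_right_eq_Icc, geom_sum_Ico h1.ne' (by omega)]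
  have : 0 < q - 1 := by linarith
  gcongr
  linarith

lemma div_natCeil_le {v b t : ℝ} (hv : v ≤ b) (hb : 0 ≤ b) (ht : 0 < t) :
    v / ⌈t⌉₊ ≤ b / t := by
  have hceil : (0 : ℝ) < ⌈t⌉₊ := by exact_mod_cast Nat.ceil_pos.mpr ht
  calc v / ⌈t⌉₊ ≤ b / ⌈t⌉₊ := by gcongr
    _ ≤ b / t := div_le_div_of_nonneg_left hb ht (Nat.le_ceil t)

lemma natCeil_mul_le {w b t : ℝ} (hw : w ≤ b) (hb : 0 ≤ b) (ht : 0 ≤ t) :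
    ⌈t⌉₊ * w ≤ t * b + b := by
  calc ⌈t⌉₊ * w ≤ ⌈t⌉₊ * b := by gcongr
    _ ≤ (t + 1) * b := by gcongr; exact (Nat.ceil_lt_add_one ht).le
    _ = t * b + b := by ring

lemma exists_nat_le_two_rpow_mul_le {γ y : ℝ} (hγ : 0 < γ) (hy : 1 < y) :
    ∃ L : ℕ, 1 ≤ L ∧ y ≤ (2 : ℝ) ^ ((L : ℝ) * γ) ∧ (2 : ℝ) ^ ((L : ℝ) * γ) ≤ 2 ^ γ * y := by
  set x := Real.logb 2 y
  have hx : 0 < x := Real.logb_pos one_lt_two hy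
  have hy2 : (2 : ℝ) ^ x = y := Real.rpow_logb two_pos (by norm_num) (by linarith)
  have hceil := Nat.ceil_lt_add_one (div_pos hx hγ).le
  have hle := Nat.le_ceil (x / γ)
  rw [div_le_iff₀ hγ] at hle
  rw [← sub_lt_iff_lt_add, lt_div_iff₀ hγ] at hceil
  refine ⟨⌈x / γ⌉₊, Nat.one_le_ceil_iff.mpr (by positivity), ?_, ?_⟩
  · rw [← hy2]
    exact Real.rpow_le_rpow_of_exponent_le one_le_two hle
  · rw [← hy2, ← Real.rpow_add two_pos]
    exact Real.rpow_le_rpow_of_exponent_le one_le_two (by linarith)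

lemma exists_level_bias_le_and_sum_cost_le {c γB γC : ℝ} (hc : 0 < c) (hγB : 0 < γB)
    (hγC : 0 < γC) :
    ∃ B > 0, ∀ ε : ℝ, 0 < ε → ε ≤ c → ∃ L : ℕ, 1 ≤ L ∧
      c * (2 : ℝ) ^ (-(L : ℝ) * γB) ≤ ε / 2 ∧
      ∑ k ∈ Icc 1 L, c * (2 : ℝ) ^ ((k : ℝ) * γC) ≤ B * ε ^ (-γC / γB) := by
  set q : ℝ := 2 ^ γC
  set p := γC / γB
  have hq : 1 < q := Real.one_lt_rpow one_lt_two hγC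
  have hq1 : 0 < q - 1 := by linarith
  refine ⟨c * q / (q - 1) * (q * (2 * c) ^ p), by positivity, fun ε hε hεc => ?_⟩
  obtain ⟨L, hL1, hyL, hLy⟩ :=
    exists_nat_le_two_rpow_mul_le hγB (y := 2 * c / ε) (by rw [one_lt_div hε]; linarith)
  refine ⟨L, hL1, ?_, ?_⟩
  · calc c * (2 : ℝ) ^ (-(L : ℝ) * γB) = c * ((2 : ℝ) ^ ((L : ℝ) * γB))⁻¹ := by
          rw [neg_mul, Real.rpow_neg zero_le_two]
      _ ≤ c * (2 * c / ε)⁻¹ := by gcongr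
      _ = ε / 2 := by field_simp
  have hfinest : (2 : ℝ) ^ ((L : ℝ) * γC) ≤ q * (2 * c) ^ p * ε ^ (-p) :=
    calc (2 : ℝ) ^ ((L : ℝ) * γC) = ((2 : ℝ) ^ ((L : ℝ) * γB)) ^ p := by
          rw [← Real.rpow_mul zero_le_two]; congr 1; simp only [p]; field_simp
      _ ≤ (2 ^ γB * (2 * c / ε)) ^ p := by gcongr
      _ = q * (2 * c) ^ p * ε ^ (-p) := by
          rw [Real.mul_rpow (by positivity) (by positivity), ← Real.rpow_mul zero_le_two,
            Real.div_rpow (by positivity) hε.le, Real.rpow_neg hε.le, mul_div_cancel₀ _ hγB.ne']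
          ring
  calc ∑ k ∈ Icc 1 L, c * (2 : ℝ) ^ ((k : ℝ) * γC) = c * ∑ k ∈ Icc 1 L, q ^ k := by
        rw [mul_sum]
        congr! 2 with k
        rw [mul_comm, Real.rpow_mul_natCast zero_le_two]
    _ ≤ c * (q ^ (L + 1) / (q - 1)) := by gcongr; exact sum_Icc_pow_le_of_one_lt hq L
    _ = c * q / (q - 1) * (2 : ℝ) ^ ((L : ℝ) * γC) := by
        rw [mul_comm (L : ℝ), Real.rpow_mul_natCast zero_le_two, pow_succ]; ring
    _ ≤ c * q / (q - 1) * (q * (2 * c) ^ p * ε ^ (-p)) := by gcongr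
    _ = c * q / (q - 1) * (q * (2 * c) ^ p) * ε ^ (-γC / γB) := by rw [neg_div]; ring

-- The witness is `m_k = ⌈λ r^k / w_k⌉` with `λ = a r / ((1 - r) η)`.
lemma exists_samples_sum_div_le {a r η : ℝ} (ha : 0 < a) (hr0 : 0 < r) (hr1 : r < 1)
    (hη : 0 < η) {L : ℕ} {V W w : ℕ → ℝ} (hw : ∀ k ∈ Icc 1 L, 0 < w k)
    (hV : ∀ k ∈ Icc 1 L, V k * w k ≤ a * (r ^ k) ^ 2) (hW : ∀ k ∈ Icc 1 L, W k ≤ w k) :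
    ∃ m : ℕ → ℕ, (∀ k ∈ Icc 1 L, 1 ≤ m k) ∧ ∑ k ∈ Icc 1 L, V k / m k ≤ η ∧
      ∑ k ∈ Icc 1 L, m k * W k ≤ a * (r / (1 - r)) ^ 2 / η + ∑ k ∈ Icc 1 L, w k := by
  set s := r / (1 - r)
  have hs : 0 < s := div_pos hr0 (by linarith)
  have hgeom : ∑ k ∈ Icc 1 L, r ^ k ≤ s := sum_Icc_pow_le_of_lt_one hr0.le hr1 L
  set lam := a * s / η
  have hlam : 0 < lam := by positivity
  have ht : ∀ k ∈ Icc 1 L, 0 < lam * r ^ k / w k := fun k hk => by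
    have := hw k hk; positivity
  refine ⟨fun k => ⌈lam * r ^ k / w k⌉₊, fun k hk => Nat.one_le_ceil_iff.mpr (ht k hk), ?_, ?_⟩
  · calc ∑ k ∈ Icc 1 L, V k / ⌈lam * r ^ k / w k⌉₊
        ≤ ∑ k ∈ Icc 1 L, a / lam * r ^ k := by
          refine sum_le_sum fun k hk => ?_
          have hwk := hw k hk
          refine (div_natCeil_le ((le_div_iff₀ hwk).mpr (hV k hk)) (by positivity)
            (ht k hk)).trans_eq ?_
          field_simp
      _ = a / lam * ∑ k ∈ Icc 1 L, r ^ k := by rw [mul_sum]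
      _ ≤ a / lam * s := by gcongr
      _ = η := by simp only [lam]; field_simp
  · calc ∑ k ∈ Icc 1 L, (⌈lam * r ^ k / w k⌉₊ : ℝ) * W k
        ≤ ∑ k ∈ Icc 1 L, (lam * r ^ k + w k) := by
          refine sum_le_sum fun k hk => ?_
          have hwk := hw k hk
          refine (natCeil_mul_le (hW k hk) hwk.le (ht k hk).le).trans_eq ?_
          field_simp
      _ = lam * ∑ k ∈ Icc 1 L, r ^ k + ∑ k ∈ Icc 1 L, w k := by rw [sum_add_distrib, mul_sum]
      _ ≤ lam * s + ∑ k ∈ Icc 1 L, w k := by gcongr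
      _ = a * s ^ 2 / η + ∑ k ∈ Icc 1 L, w k := by ring

lemma two_rpow_neg_mul_mul_two_rpow_mul (k : ℕ) (γV γC : ℝ) :
    (2 : ℝ) ^ (-(k : ℝ) * γV) * (2 : ℝ) ^ ((k : ℝ) * γC)
      = (((2 : ℝ) ^ ((γC - γV) / 2)) ^ k) ^ 2 := by
  rw [← Real.rpow_add two_pos, ← Real.rpow_mul_natCast zero_le_two,
    ← Real.rpow_mul_natCast zero_le_two]
  congr 1
  push_cast
  ring

theorem stmt_13_general {Ω : Type*} [MeasurableSpace Ω] (P : Measure Ω)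
    (Z : Ω → ℝ) (Zs : ℕ → Ω → ℝ)
    (S : ℕ → ℕ → Finset ℕ) (β : ℕ → ℕ → ℕ → ℝ) (αv : ℕ → ℕ → ℝ) (W : ℕ → ℕ → ℝ)
    (c γB γV γC : ℝ) (hc : 0 < c) (hγB : 0 < γB) (hγC : 0 < γC)
    (hCV : γC < γV)
    (hM1 : ∀ L : ℕ, 1 ≤ L →
      |(∑ ℓ ∈ Finset.Icc 1 L, αv L ℓ * ∫ ω, Zs ℓ ω ∂P) - ∫ ω, Z ω ∂P|
        ≤ c * (2 : ℝ) ^ (-(L : ℝ) * γB))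
    (hM2 : ∀ L k : ℕ, 1 ≤ k → k ≤ L →
      variance (fun ω => ∑ ℓ ∈ S L k, β L k ℓ * Zs ℓ ω) P
        ≤ c * (2 : ℝ) ^ (-(k : ℝ) * γV))
    (hM3 : ∀ L k : ℕ, 1 ≤ k → k ≤ L → W L k ≤ c * (2 : ℝ) ^ ((k : ℝ) * γC)) :
    ∃ c' > 0, ∃ ε₀ > 0, ∀ ε : ℝ, 0 < ε → ε ≤ ε₀ →
      ∃ (L : ℕ) (m : ℕ → ℕ), 1 ≤ L ∧ (∀ k ∈ Finset.Icc 1 L, 1 ≤ m k) ∧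
        ((∑ ℓ ∈ Finset.Icc 1 L, αv L ℓ * ∫ ω, Zs ℓ ω ∂P) - ∫ ω, Z ω ∂P) ^ 2
            + ∑ k ∈ Finset.Icc 1 L,
                variance (fun ω => ∑ ℓ ∈ S L k, β L k ℓ * Zs ℓ ω) P / (m k : ℝ)
          ≤ ε ^ 2 ∧
        ∑ k ∈ Finset.Icc 1 L, (m k : ℝ) * W L k
          ≤ c' * (ε ^ (-γC / γB) + ε ^ (-2 : ℝ)) := by
  obtain ⟨B, hB, hlevel⟩ := exists_level_bias_le_and_sum_cost_le hc hγB hγC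
  set r : ℝ := 2 ^ ((γC - γV) / 2)
  have hr0 : 0 < r := by positivity
  have hr1 : r < 1 := Real.rpow_lt_one_of_one_lt_of_neg one_lt_two (by linarith)
  set A := 2 * (c ^ 2 * (r / (1 - r)) ^ 2)
  refine ⟨max A B, lt_max_of_lt_right hB, c, hc, fun ε hε hεc => ?_⟩
  obtain ⟨L, hL1, hbias, hcost⟩ := hlevel ε hε hεc
  obtain ⟨m, hm1, hvar, hsamples⟩ := exists_samples_sum_div_le (sq_pos_of_pos hc) hr0 hr1
    (half_pos (pow_pos hε 2)) (L := L)
    (V := fun k => variance (fun ω => ∑ ℓ ∈ S L k, β L k ℓ * Zs ℓ ω) P)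
    (w := fun k => c * (2 : ℝ) ^ ((k : ℝ) * γC))
    (fun k _ => by positivity)
    (fun k hk => by
      obtain ⟨hk1, hkL⟩ := mem_Icc.mp hk
      calc _ ≤ c * (2 : ℝ) ^ (-(k : ℝ) * γV) * (c * (2 : ℝ) ^ ((k : ℝ) * γC)) := by
            gcongr; exact hM2 L k hk1 hkL
        _ = c ^ 2 * (r ^ k) ^ 2 := by rw [← two_rpow_neg_mul_mul_two_rpow_mul]; ring)
    (fun k hk => hM3 L k (mem_Icc.mp hk).1 (mem_Icc.mp hk).2)
  refine ⟨L, m, hL1, hm1, ?_, ?_⟩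
  · have hbias' := (hM1 L hL1).trans hbias
    have := sq_le_sq' (neg_le_of_abs_le hbias') (le_of_abs_le hbias')
    nlinarith
  · have hε2 : c ^ 2 * (r / (1 - r)) ^ 2 / (ε ^ 2 / 2) = A * ε ^ (-2 : ℝ) := by
      rw [Real.rpow_neg hε.le, Real.rpow_two]; simp only [A]; field_simp
    have hAmax := mul_le_mul_of_nonneg_right (le_max_left A B) (by positivity : 0 ≤ ε ^ (-2 : ℝ))
    have hBmax := mul_le_mul_of_nonneg_right (le_max_right A B)
      (by positivity : 0 ≤ ε ^ (-γC / γB))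
    linarith

/-- Theorem 2.3, case `γ_C < γ_V`: under the bias assumption (M1) on the linear
combination `α^L`, the group-variance decay (M2) for the coefficients `β^k`
(with `(β^k)ᵀCβ^k = Var(∑_{ℓ∈S^k} β^k_ℓ Z_ℓ)`), and the group-cost growth (M3),
for every small `ε > 0` there are a level `L` and sample numbers `m_k ≥ 1` such that
the linear unbiased estimator (whose MSE, by independence of the sample groups, equals
the squared bias plus `∑_k Var(∑_{ℓ∈S^k} β^k_ℓ Z_ℓ)/m_k`) achieves MSE `≤ ε²` with
cost `∑_k m_k W_k ≤ c'(ε^{−γ_C/γ_B} + ε^{−2})`. -/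
theorem stmt_13 {Ω : Type*} [MeasurableSpace Ω] (P : Measure Ω) [IsProbabilityMeasure P]
    (Z : Ω → ℝ) (Zs : ℕ → Ω → ℝ) (hZ : Integrable Z P) (hZs : ∀ ℓ, MemLp (Zs ℓ) 2 P)
    (S : ℕ → ℕ → Finset ℕ) (β : ℕ → ℕ → ℕ → ℝ) (αv : ℕ → ℕ → ℝ) (W : ℕ → ℕ → ℝ)
    (c γB γV γC : ℝ) (hc : 0 < c) (hγB : 0 < γB) (hγV : 0 < γV) (hγC : 0 < γC)
    (hCV : γC < γV) (hWpos : ∀ L k, 0 < W L k)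
    (hM0 : ∀ L ℓ, αv L ℓ = ∑ k ∈ Finset.Icc 1 L, β L k ℓ)
    (hM0' : ∀ L k ℓ, ℓ ∉ S L k → β L k ℓ = 0)
    (hM1 : ∀ L : ℕ, 1 ≤ L →
      |(∑ ℓ ∈ Finset.Icc 1 L, αv L ℓ * ∫ ω, Zs ℓ ω ∂P) - ∫ ω, Z ω ∂P|
        ≤ c * (2 : ℝ) ^ (-(L : ℝ) * γB))
    (hM2 : ∀ L k : ℕ, 1 ≤ k → k ≤ L →
      variance (fun ω => ∑ ℓ ∈ S L k, β L k ℓ * Zs ℓ ω) P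
        ≤ c * (2 : ℝ) ^ (-(k : ℝ) * γV))
    (hM3 : ∀ L k : ℕ, 1 ≤ k → k ≤ L → W L k ≤ c * (2 : ℝ) ^ ((k : ℝ) * γC)) :
    ∃ c' > 0, ∃ ε₀ > 0, ∀ ε : ℝ, 0 < ε → ε ≤ ε₀ →
      ∃ (L : ℕ) (m : ℕ → ℕ), 1 ≤ L ∧ (∀ k ∈ Finset.Icc 1 L, 1 ≤ m k) ∧
        ((∑ ℓ ∈ Finset.Icc 1 L, αv L ℓ * ∫ ω, Zs ℓ ω ∂P) - ∫ ω, Z ω ∂P) ^ 2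
            + ∑ k ∈ Finset.Icc 1 L,
                variance (fun ω => ∑ ℓ ∈ S L k, β L k ℓ * Zs ℓ ω) P / (m k : ℝ)
          ≤ ε ^ 2 ∧
        ∑ k ∈ Finset.Icc 1 L, (m k : ℝ) * W L k
          ≤ c' * (ε ^ (-γC / γB) + ε ^ (-2 : ℝ)) :=
  stmt_13_general P Z Zs S β αv W c γB γV γC hc hγB hγC hCV hM1 hM2 hM3
end
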